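/- arXiv:quant-ph/9911117 — 4 statements merged into one kernel-verified Lean document; each statement's English description precedes it below -/
import Mathlib

section
/- Let N ≥ 2, 1 ≤ k ≤ N − 1, and let F be a real number with k/N < F ≤ 1. Then the density matrix ρ_F on ℂ^N ⊗ ℂ^N does not belong to S_k; that is, in any decomposition ρ_F = Σ_i p_i |ψ_i⟩⟨ψ_i| into pure states, at least one ψ_i has Schmidt rank at least k + 1. -/
open Matrix BigOperators
open scoped ComplexOrder

/-- The `n × n` matrix `M_ψ` associated to a vector `ψ ∈ ℂ^α ⊗ ℂ^β`,
with entries `(M_ψ)_{ij} = ⟨e_i ⊗ e_j, ψ⟩ = ψ (i, j)`. -/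
def matOfVec {α β : Type*} (ψ : α × β → ℂ) : Matrix α β ℂ :=
  Matrix.of fun i j => ψ (i, j)

/-- The Schmidt rank of a bipartite vector is the rank of its associated matrix. -/
noncomputable def schmidtRank {α β : Type*} [Fintype β] (ψ : α × β → ℂ) : ℕ :=
  (matOfVec ψ).rank

/-- `ψ` is a unit vector. -/
def IsUnitVec {γ : Type*} [Fintype γ] (ψ : γ → ℂ) : Prop :=
  ∑ x, Complex.normSq (ψ x) = 1

/-- The outer product `|ψ⟩⟨ψ|`. -/
def outer {γ : Type*} (ψ : γ → ℂ) : Matrix γ γ ℂ :=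
  Matrix.of fun x y => ψ x * star (ψ y)

/-- `ρ ∈ S_k`: `ρ` admits a decomposition `ρ = ∑ i, p i • |ψ i⟩⟨ψ i|` with `p i ≥ 0`,
`∑ i, p i = 1`, each `ψ i` a unit vector of Schmidt rank at most `k`. -/
def InSchmidtClass {α : Type*} [Fintype α] (k : ℕ)
    (ρ : Matrix (α × α) (α × α) ℂ) : Prop :=
  ∃ (m : ℕ) (p : Fin m → ℝ) (ψ : Fin m → α × α → ℂ),
    (∀ i, 0 ≤ p i) ∧ (∑ i, p i) = 1 ∧
    (∀ i, IsUnitVec (ψ i)) ∧ (∀ i, schmidtRank (ψ i) ≤ k) ∧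
    ρ = ∑ i, (p i : ℂ) • outer (ψ i)

/-- The map `1 ⊗ Λ`, applying `Λ` to each block of a matrix indexed by `γ × Fin n`. -/
def blockMap {γ : Type*} {n m : ℕ}
    (Λ : Matrix (Fin n) (Fin n) ℂ → Matrix (Fin m) (Fin m) ℂ)
    (X : Matrix (γ × Fin n) (γ × Fin n) ℂ) : Matrix (γ × Fin m) (γ × Fin m) ℂ :=
  Matrix.of fun a b => Λ (Matrix.of fun s t => X (a.1, s) (b.1, t)) a.2 b.2

/-- `Λ` is Hermiticity-preserving: `Λ(X†) = Λ(X)†`. -/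
def HermPreserving {n m : ℕ}
    (Λ : Matrix (Fin n) (Fin n) ℂ → Matrix (Fin m) (Fin m) ℂ) : Prop :=
  ∀ X, Λ Xᴴ = (Λ X)ᴴ

/-- `Λ` is `k`-positive: `(1 ⊗ Λ)(|ψ⟩⟨ψ|)` is positive semidefinite for every
unit vector `ψ ∈ ℂ^N ⊗ ℂ^N` of Schmidt rank at most `k`. -/
def kPositive {N : ℕ} (k : ℕ)
    (Λ : Matrix (Fin N) (Fin N) ℂ → Matrix (Fin N) (Fin N) ℂ) : Prop :=
  ∀ ψ : Fin N × Fin N → ℂ, IsUnitVec ψ → schmidtRank ψ ≤ k →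
    (blockMap Λ (outer ψ)).PosSemidef

/-- The maximally entangled state `Ψ⁺ = (1/√N) ∑ i, e i ⊗ e i`. -/
noncomputable def psiPlus (N : ℕ) : Fin N × Fin N → ℂ :=
  fun x => if x.1 = x.2 then ((Real.sqrt N : ℂ))⁻¹ else 0

/-- The isotropic state `ρ_F = F |Ψ⁺⟩⟨Ψ⁺| + ((1−F)/(N²−1)) (I − |Ψ⁺⟩⟨Ψ⁺|)`. -/
noncomputable def rhoF (N : ℕ) (F : ℝ) : Matrix (Fin N × Fin N) (Fin N × Fin N) ℂ :=
  (F : ℂ) • outer (psiPlus N) +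
    (((1 - F) / ((N : ℝ) ^ 2 - 1) : ℝ) : ℂ) •
      ((1 : Matrix (Fin N × Fin N) (Fin N × Fin N) ℂ) - outer (psiPlus N))

/-!
The fidelity `⟨Ψ⁺|ρ|Ψ⁺⟩` is linear in `ρ` and equals `F` at `ρ_F`. For a pure state,
`⟨Ψ⁺, ψ⟩ = tr(M_ψ) / √N`, and writing `M_ψ = A Aᴴ M_ψ` with `A` an orthonormal basis of the column
space of `M_ψ`, Cauchy–Schwarz for the trace pairing gives `|tr M_ψ|² ≤ rank(M_ψ) ‖M_ψ‖²_F`. Hence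
every unit vector of Schmidt rank at most `k` has fidelity at most `k / N`, and so does every
convex combination of such states, whereas `ρ_F` has fidelity `F > k / N`.
-/

theorem Complex.normSq_sum_mul_le {ι : Type*} [Fintype ι] (a b : ι → ℂ) :
    Complex.normSq (∑ i, a i * b i) ≤
      (∑ i, Complex.normSq (a i)) * ∑ i, Complex.normSq (b i) := by
  simp only [Complex.normSq_eq_norm_sq]
  calc ‖∑ i, a i * b i‖ ^ 2 ≤ (∑ i, ‖a i‖ * ‖b i‖) ^ 2 := by
        gcongr
        exact (norm_sum_le _ _).trans_eq (by simp only [norm_mul])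
    _ ≤ _ := Finset.sum_mul_sq_le_sq_mul_sq _ _ _

namespace Matrix

variable {m n : Type*} [Fintype m] [Fintype n]

theorem normSq_trace_mul_le (X : Matrix m n ℂ) (Y : Matrix n m ℂ) :
    Complex.normSq (X * Y).trace ≤
      (∑ i, ∑ j, Complex.normSq (X i j)) * ∑ j, ∑ i, Complex.normSq (Y j i) := by
  have h := Complex.normSq_sum_mul_le (fun p : m × n => X p.1 p.2) (fun p => Y p.2 p.1)
  rwa [Fintype.sum_prod_type, Fintype.sum_prod_type, Fintype.sum_prod_type,
    Finset.sum_comm (f := fun i j => Complex.normSq (Y j i))] at h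

theorem trace_conjTranspose_mul_self (X : Matrix m n ℂ) :
    (Xᴴ * X).trace = ((∑ i, ∑ j, Complex.normSq (X i j) : ℝ) : ℂ) := by
  rw [trace, Finset.sum_comm]
  simp [mul_apply, Complex.normSq_eq_conj_mul_self]

theorem exists_orthonormal_cols_mul (M : Matrix m n ℂ) :
    ∃ A : Matrix m (Fin M.rank) ℂ, Aᴴ * A = 1 ∧ A * (Aᴴ * M) = M := by
  let W : Submodule ℂ (EuclideanSpace ℂ m) :=
    Submodule.span ℂ (Set.range fun j => WithLp.toLp 2 (M.col j))
  have hW : Module.finrank ℂ W = M.rank := by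
    rw [rank_eq_finrank_span_cols, ← (WithLp.linearEquiv 2 ℂ (m → ℂ)).symm.finrank_map_eq,
      Submodule.map_span, ← Set.range_comp]
    rfl
  let b := (stdOrthonormalBasis ℂ W).reindex (finCongr hW)
  refine ⟨Matrix.of fun i s => (b s : EuclideanSpace ℂ m) i, ?_, ?_⟩
  · ext s t
    rw [one_apply, ← orthonormal_iff_ite.mp b.orthonormal s t, Submodule.coe_inner,
      EuclideanSpace.inner_eq_star_dotProduct]
    simp [mul_apply, dotProduct, mul_comm]
  · ext i j
    have hj : WithLp.toLp 2 (M.col j) ∈ W := Submodule.subset_span ⟨j, rfl⟩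
    have hrepr := congrArg (fun v : W => (v : EuclideanSpace ℂ m) i) (b.sum_repr' ⟨_, hj⟩)
    simp only [Submodule.coe_inner, EuclideanSpace.inner_eq_star_dotProduct, dotProduct,
      col_apply, Pi.star_apply, RCLike.star_def, AddSubmonoidClass.coe_finsetSum,
      SetLike.val_smul, WithLp.ofLp_sum, WithLp.ofLp_smul, Finset.sum_apply, Pi.smul_apply,
      smul_eq_mul] at hrepr
    rw [← hrepr]
    simp only [mul_apply, conjTranspose_apply, of_apply, Complex.star_def, Finset.mul_sum,
      Finset.sum_mul]
    exact Finset.sum_congr rfl fun s _ => Finset.sum_congr rfl fun k _ => by ring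

theorem normSq_trace_le_rank_mul (M : Matrix m m ℂ) :
    Complex.normSq M.trace ≤ M.rank * ∑ i, ∑ j, Complex.normSq (M i j) := by
  obtain ⟨A, hA, hAM⟩ := M.exists_orthonormal_cols_mul
  have hA_frob : ∑ i, ∑ s, Complex.normSq (A i s) = M.rank := by
    have h := trace_conjTranspose_mul_self A
    rw [hA, trace_one, Fintype.card_fin] at h
    exact_mod_cast h.symm
  have hAM_frob :
      ∑ s, ∑ i, Complex.normSq ((Aᴴ * M) s i) = ∑ i, ∑ j, Complex.normSq (M i j) := by
    have h : ((Aᴴ * M)ᴴ * (Aᴴ * M)).trace = (Mᴴ * M).trace := by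
      rw [conjTranspose_mul, conjTranspose_conjTranspose, Matrix.mul_assoc, hAM]
    rw [trace_conjTranspose_mul_self, trace_conjTranspose_mul_self] at h
    exact_mod_cast h
  calc Complex.normSq M.trace = Complex.normSq (A * (Aᴴ * M)).trace := by rw [hAM]
    _ ≤ _ := normSq_trace_mul_le _ _
    _ = _ := by rw [hA_frob, hAM_frob]

end Matrix

section Expectation

variable {γ : Type*} [Fintype γ]

def expectation (Φ : γ → ℂ) : Matrix γ γ ℂ →ₗ[ℂ] ℂ where
  toFun ρ := star Φ ⬝ᵥ ρ *ᵥ Φ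
  map_add' ρ σ := by simp [add_mulVec, dotProduct_add]
  map_smul' c ρ := by simp [smul_mulVec, dotProduct_smul]

theorem expectation_one [DecidableEq γ] (Φ : γ → ℂ) :
    expectation Φ 1 = star Φ ⬝ᵥ Φ := by
  simp [expectation]

theorem expectation_outer (Φ ψ : γ → ℂ) :
    expectation Φ (outer ψ) = Complex.normSq (star Φ ⬝ᵥ ψ) := by
  have : outer ψ = vecMulVec ψ (star ψ) := rfl
  simp [expectation, this, vecMulVec_mulVec, star_dotProduct _ ψ, Complex.mul_conj]

theorem InSchmidtClass.re_expectation_le {α : Type*} [Fintype α] {k : ℕ}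
    {ρ : Matrix (α × α) (α × α) ℂ} (hρ : InSchmidtClass k ρ) (Φ : α × α → ℂ) {c : ℝ}
    (hc : ∀ ψ, IsUnitVec ψ → schmidtRank ψ ≤ k → Complex.normSq (star Φ ⬝ᵥ ψ) ≤ c) :
    (expectation Φ ρ).re ≤ c := by
  obtain ⟨m, p, ψ, hp, hp_sum, hψ, hψ_rank, rfl⟩ := hρ
  simp only [map_sum, map_smul, expectation_outer, smul_eq_mul, ← Complex.ofReal_mul,
    Complex.re_sum, Complex.ofReal_re]
  calc ∑ i, p i * Complex.normSq (star Φ ⬝ᵥ ψ i) ≤ ∑ i, p i * c :=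
        Finset.sum_le_sum fun i _ => mul_le_mul_of_nonneg_left (hc _ (hψ i) (hψ_rank i)) (hp i)
    _ = c := by rw [← Finset.sum_mul, hp_sum, one_mul]

end Expectation

section IsotropicState

variable {N : ℕ}

theorem star_psiPlus_dotProduct (ψ : Fin N × Fin N → ℂ) :
    star (psiPlus N) ⬝ᵥ ψ = (Real.sqrt N : ℂ)⁻¹ * (matOfVec ψ).trace := by
  simp [dotProduct, Fintype.sum_prod_type, psiPlus, trace, matOfVec, Finset.mul_sum,
    apply_ite (starRingEnd ℂ), ite_mul]

theorem star_psiPlus_dotProduct_self (hN : N ≠ 0) : star (psiPlus N) ⬝ᵥ psiPlus N = 1 := by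
  rw [star_psiPlus_dotProduct]
  have hsqrt : ((Real.sqrt N : ℝ) : ℂ) ^ 2 = N := by
    rw [← Complex.ofReal_pow, Real.sq_sqrt (Nat.cast_nonneg N), Complex.ofReal_natCast]
  have hsqrt_ne : ((Real.sqrt N : ℝ) : ℂ) ≠ 0 := by
    simpa [Real.sqrt_eq_zero'] using hN
  simp only [trace, matOfVec, psiPlus, diag_apply, of_apply, if_true, Finset.sum_const,
    Finset.card_univ, Fintype.card_fin, nsmul_eq_mul]
  field_simp
  exact hsqrt.symm

theorem normSq_star_psiPlus_dotProduct_le {k : ℕ} {ψ : Fin N × Fin N → ℂ} (hψ : IsUnitVec ψ)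
    (hψ_rank : schmidtRank ψ ≤ k) : Complex.normSq (star (psiPlus N) ⬝ᵥ ψ) ≤ k / N := by
  have hfrob : ∑ i, ∑ j, Complex.normSq (matOfVec ψ i j) = 1 := by
    rw [← hψ, Fintype.sum_prod_type]; rfl
  have htrace := (matOfVec ψ).normSq_trace_le_rank_mul
  rw [hfrob, mul_one] at htrace
  rw [star_psiPlus_dotProduct, Complex.normSq_mul, ← Complex.ofReal_inv, Complex.normSq_ofReal,
    ← Real.sqrt_inv, Real.mul_self_sqrt (by positivity), div_eq_inv_mul]
  gcongr
  exact htrace.trans (by exact_mod_cast hψ_rank)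

theorem expectation_psiPlus_rhoF (hN : N ≠ 0) (F : ℝ) :
    expectation (psiPlus N) (rhoF N F) = F := by
  simp [rhoF, expectation_one, expectation_outer, star_psiPlus_dotProduct_self hN]

end IsotropicState

theorem rhoF_not_in_schmidt_class_general {N k : ℕ} (hN : 2 ≤ N)
    (F : ℝ) (hF1 : (k : ℝ) / N < F) :
    ¬ InSchmidtClass k (rhoF N F) := by
  intro hρ
  have hF := hρ.re_expectation_le (psiPlus N) fun _ => normSq_star_psiPlus_dotProduct_le
  rw [expectation_psiPlus_rhoF (by omega), Complex.ofReal_re] at hF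
  linarith

/-- For `N ≥ 2`, `1 ≤ k ≤ N − 1` and `k/N < F ≤ 1`, the isotropic state
`ρ_F` does not belong to `S_k`. -/
theorem rhoF_not_in_schmidt_class {N k : ℕ} (hN : 2 ≤ N) (hk : 1 ≤ k) (hkN : k + 1 ≤ N)
    (F : ℝ) (hF1 : (k : ℝ) / N < F) (hF2 : F ≤ 1) :
    ¬ InSchmidtClass k (rhoF N F) :=
  rhoF_not_in_schmidt_class_general hN F hF1
end

section
/- Let ρ be a density matrix on ℂ^N ⊗ ℂ^N and σ a density matrix on ℂ^M ⊗ ℂ^M. If ρ ⊗ σ, regarded as a density matrix on ℂ^{NM} ⊗ ℂ^{NM} via the reordering isomorphism (ℂ^N ⊗ ℂ^N) ⊗ (ℂ^M ⊗ ℂ^M) ≅ (ℂ^N ⊗ ℂ^M) ⊗ (ℂ^N ⊗ ℂ^M), belongs to S_k, then ρ belongs to S_k on ℂ^N ⊗ ℂ^N. -/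
open Matrix BigOperators
open scoped ComplexOrder

/-- The Kronecker product `ρ ⊗ σ` of bipartite states, with indices regrouped via the
reordering isomorphism `(ℂ^α ⊗ ℂ^α) ⊗ (ℂ^β ⊗ ℂ^β) ≅ (ℂ^α ⊗ ℂ^β) ⊗ (ℂ^α ⊗ ℂ^β)` so that the
first factor collects the two Alice systems and the second the two Bob systems. -/
def reorderedKron {α β : Type*}
    (ρ : Matrix (α × α) (α × α) ℂ) (σ : Matrix (β × β) (β × β) ℂ) :
    Matrix ((α × β) × (α × β)) ((α × β) × (α × β)) ℂ :=
  Matrix.of fun x y =>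
    ρ (x.1.1, x.2.1) (y.1.1, y.2.1) * σ (x.1.2, x.2.2) (y.1.2, y.2.2)

/-!
Tracing out the two `M`-systems of `ρ ⊗ σ` returns `(trace σ) • ρ = ρ`. Applied to a
decomposition `∑ i, p i • |ψ i⟩⟨ψ i|` of `ρ ⊗ σ`, the partial trace gives
`ρ = ∑ i s t, p i • |ψ i (·, s, t)⟩⟨ψ i (·, s, t)|`, where the slice `ψ i (·, s, t)` of `ψ i` at
the `M`-indices `(s, t)` has as coefficient matrix a submatrix of that of `ψ i`, hence Schmidt
rank at most `k`. Normalising the nonzero slices yields a decomposition witnessing `ρ ∈ S_k`.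
-/

section Reordering

variable {α β : Type*}

def reorderIndex (x : α × α) (st : β × β) : (α × β) × (α × β) :=
  ((x.1, st.1), (x.2, st.2))

def slice (ψ : (α × β) × (α × β) → ℂ) (st : β × β) : α × α → ℂ :=
  fun x => ψ (reorderIndex x st)

theorem schmidtRank_slice_le [Fintype α] [Fintype β] (ψ : (α × β) × (α × β) → ℂ)
    (st : β × β) : schmidtRank (slice ψ st) ≤ schmidtRank ψ :=
  rank_submatrix_le (matOfVec ψ) (·, st.1) (·, st.2)

theorem sum_normSq_slice [Fintype α] [Fintype β] (ψ : (α × β) × (α × β) → ℂ) :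
    ∑ st, ∑ x, Complex.normSq (slice ψ st x) = ∑ y, Complex.normSq (ψ y) := by
  rw [← Fintype.sum_prod_type_right']
  exact Equiv.sum_comp (Equiv.prodProdProdComm α α β β) (fun y => Complex.normSq (ψ y))

def partialTrace {R : Type*} [Semiring R] [Fintype β] :
    Matrix ((α × β) × (α × β)) ((α × β) × (α × β)) R →ₗ[R] Matrix (α × α) (α × α) R where
  toFun X := of fun x y => ∑ st : β × β, X (reorderIndex x st) (reorderIndex y st)
  map_add' X Y := by ext; simp [Finset.sum_add_distrib]
  map_smul' c X := by ext; simp [Finset.mul_sum]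

theorem partialTrace_reorderedKron [Fintype β] (ρ : Matrix (α × α) (α × α) ℂ)
    (σ : Matrix (β × β) (β × β) ℂ) : partialTrace (reorderedKron ρ σ) = σ.trace • ρ := by
  ext x y
  simp [partialTrace, reorderedKron, reorderIndex, Matrix.trace, Finset.mul_sum, mul_comm]

theorem partialTrace_outer [Fintype β] (ψ : (α × β) × (α × β) → ℂ) :
    partialTrace (outer ψ) = ∑ st, outer (slice ψ st) := by
  ext x y
  simp [partialTrace, outer, slice, Matrix.sum_apply]

end Reordering

theorem outer_ofReal_smul {γ : Type*} (r : ℝ) (φ : γ → ℂ) :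
    outer ((r : ℂ) • φ) = ((r ^ 2 : ℝ) : ℂ) • outer φ := by
  ext x y
  simp only [outer, of_apply, Pi.smul_apply, Matrix.smul_apply, smul_eq_mul, star_mul',
    RCLike.star_def, Complex.conj_ofReal, Complex.ofReal_pow]
  ring

theorem sum_normSq_ofReal_smul {γ : Type*} [Fintype γ] (r : ℝ) (φ : γ → ℂ) :
    ∑ x, Complex.normSq (((r : ℂ) • φ) x) = r ^ 2 * ∑ x, Complex.normSq (φ x) := by
  simp [Complex.normSq_mul, Finset.mul_sum, sq]

theorem schmidtRank_smul_le {α β : Type*} [Fintype β] (c : ℂ) (ψ : α × β → ℂ) :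
    schmidtRank (c • ψ) ≤ schmidtRank ψ := by
  change (c • matOfVec ψ).rank ≤ (matOfVec ψ).rank
  rcases eq_or_ne c 0 with rfl | hc
  · simp
  · exact (rank_smul_of_mem_nonZeroDivisors (matOfVec ψ) (mem_nonZeroDivisors_of_ne_zero hc)).le

theorem inSchmidtClass_of_fintype_index {α ι : Type*} [Fintype α] [Fintype ι] {k : ℕ}
    {ρ : Matrix (α × α) (α × α) ℂ} (p : ι → ℝ) (ψ : ι → α × α → ℂ)
    (hp : ∀ i, 0 ≤ p i) (hp_sum : ∑ i, p i = 1) (hψ : ∀ i, IsUnitVec (ψ i))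
    (hψk : ∀ i, schmidtRank (ψ i) ≤ k) (hρ : ρ = ∑ i, (p i : ℂ) • outer (ψ i)) :
    InSchmidtClass k ρ := by
  let e := (Fintype.equivFin ι).symm
  refine ⟨Fintype.card ι, p ∘ e, ψ ∘ e, fun i => hp _, ?_, fun i => hψ _, fun i => hψk _, ?_⟩
  · exact (Equiv.sum_comp e p).trans hp_sum
  · exact hρ.trans (Equiv.sum_comp e fun i => (p i : ℂ) • outer (ψ i)).symm

theorem inSchmidtClass_of_eq_sum_smul_outer {α ι : Type*} [Fintype α] [Fintype ι] {k : ℕ}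
    {ρ : Matrix (α × α) (α × α) ℂ} (w : ι → ℝ) (φ : ι → α × α → ℂ) (hw : ∀ j, 0 ≤ w j)
    (hφk : ∀ j, schmidtRank (φ j) ≤ k)
    (hw_sum : ∑ j, w j * ∑ x, Complex.normSq (φ j x) = 1)
    (hρ : ρ = ∑ j, (w j : ℂ) • outer (φ j)) :
    InSchmidtClass k ρ := by
  set n : ι → ℝ := fun j => ∑ x, Complex.normSq (φ j x)
  have hn_nonneg (j : ι) : 0 ≤ n j := Finset.sum_nonneg fun x _ => Complex.normSq_nonneg _
  have hφ_zero (j : ι) (hj : n j = 0) : φ j = 0 := by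
    funext x
    exact Complex.normSq_eq_zero.1 ((Finset.sum_eq_zero_iff_of_nonneg
      fun x _ => Complex.normSq_nonneg (φ j x)).1 hj x (Finset.mem_univ x))
  have hterm_zero (j : ι) (hj : w j * n j = 0) : (w j : ℂ) • outer (φ j) = 0 := by
    rcases mul_eq_zero.1 hj with h | h
    · simp [h]
    · ext; simp [hφ_zero j h, outer]
  have hnorm (j : ι) (hj : n j ≠ 0) : (√(n j))⁻¹ ^ 2 * n j = 1 := by
    rw [inv_pow, Real.sq_sqrt (hn_nonneg j), inv_mul_cancel₀ hj]
  classical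
  refine inSchmidtClass_of_fintype_index (ι := {j // w j * n j ≠ 0})
    (fun j => w j * n j) (fun j => (((√(n j))⁻¹ : ℝ) : ℂ) • φ j)
    (fun j => mul_nonneg (hw j) (hn_nonneg j)) ?_ ?_
    (fun j => (schmidtRank_smul_le _ _).trans (hφk j)) ?_
  · rw [← Finset.sum_subtype {j | w j * n j ≠ 0} (fun j => by simp) (fun j => w j * n j),
      Finset.sum_filter_ne_zero]
    exact hw_sum
  · intro j
    rw [IsUnitVec, sum_normSq_ofReal_smul]
    exact hnorm j (right_ne_zero_of_mul j.2)
  · rw [hρ, ← Finset.sum_filter_of_ne (p := fun j => w j * n j ≠ 0)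
      fun j _ h => mt (hterm_zero j) h, Finset.sum_subtype (p := fun j => w j * n j ≠ 0) _
      (fun j => by simp)]
    refine Finset.sum_congr rfl fun j _ => ?_
    rw [outer_ofReal_smul, smul_smul, ← Complex.ofReal_mul, mul_assoc, mul_comm (n j),
      hnorm j (right_ne_zero_of_mul j.2), mul_one]

theorem schmidt_class_of_kron_general {N M k : ℕ}
    (ρ : Matrix (Fin N × Fin N) (Fin N × Fin N) ℂ)
    (σ : Matrix (Fin M × Fin M) (Fin M × Fin M) ℂ)
    (hστ : σ.trace = 1)
    (h : InSchmidtClass k (reorderedKron ρ σ)) :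
    InSchmidtClass k ρ := by
  obtain ⟨m, p, ψ, hp, hp_sum, hψ, hψk, hdec⟩ := h
  refine inSchmidtClass_of_eq_sum_smul_outer (fun j : Fin m × (Fin M × Fin M) => p j.1)
    (fun j => slice (ψ j.1) j.2) (fun j => hp j.1)
    (fun j => (schmidtRank_slice_le _ _).trans (hψk j.1)) ?_ ?_
  · calc ∑ j : Fin m × (Fin M × Fin M), p j.1 * ∑ x, Complex.normSq (slice (ψ j.1) j.2 x)
        = ∑ i, p i * ∑ st, ∑ x, Complex.normSq (slice (ψ i) st x) := by
          simp only [Fintype.sum_prod_type, Finset.mul_sum]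
      _ = 1 := by
          simp only [sum_normSq_slice, show ∀ i, ∑ y, Complex.normSq (ψ i y) = 1 from hψ, mul_one,
            hp_sum]
  · calc ρ = partialTrace (reorderedKron ρ σ) := by
          rw [partialTrace_reorderedKron, hστ, one_smul]
      _ = ∑ i, (p i : ℂ) • ∑ st, outer (slice (ψ i) st) := by
          simp only [hdec, map_sum, map_smul, partialTrace_outer]
      _ = _ := by simp only [Fintype.sum_prod_type, Finset.smul_sum]

/-- If `ρ ⊗ σ` (reordered as a bipartite state on `ℂ^{NM} ⊗ ℂ^{NM}`)
belongs to `S_k`, then `ρ` belongs to `S_k`. -/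
theorem schmidt_class_of_kron {N M k : ℕ} (hk : 1 ≤ k)
    (ρ : Matrix (Fin N × Fin N) (Fin N × Fin N) ℂ)
    (hρ : ρ.PosSemidef) (hρτ : ρ.trace = 1)
    (σ : Matrix (Fin M × Fin M) (Fin M × Fin M) ℂ)
    (hσ : σ.PosSemidef) (hστ : σ.trace = 1)
    (h : InSchmidtClass k (reorderedKron ρ σ)) :
    InSchmidtClass k ρ :=
  schmidt_class_of_kron_general ρ σ hστ h
end

section
/- Let N = 2 and F = 1/√2, and let ρ_F be the corresponding density matrix on ℂ² ⊗ ℂ². Then ρ_F ⊗ ρ_F, regarded as a density matrix on ℂ⁴ ⊗ ℂ⁴ via the reordering isomorphism that groups the two 'Alice' qubits together and the two 'Bob' qubits together, does not belong to S_1: it is not separable across the (A₁A₂):(B₁B₂) cut, i.e. it admits no decomposition into pure product states. -/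
/-!
The witness is the fidelity with the maximally entangled vector `Φ = Ψ⁺ ⊗ Ψ⁺` of `ℂ⁴ ⊗ ℂ⁴`.
A Schmidt-rank-one unit vector is a product `u ⊗ v`, and by Cauchy–Schwarz
`|⟨Φ, u ⊗ v⟩|² = |∑ i, u i * v i|² / 4 ≤ 1 / 4`; hence every separable state has fidelity
at most `1 / 4`. The fidelity of `ρ_F ⊗ ρ_F` is `F² = 1 / 2`.
-/

open Matrix BigOperators
open scoped ComplexOrder

theorem Matrix.exists_eq_vecMulVec_of_rank_le_one {m n K : Type*} [Fintype n] [Field K]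
    {A : Matrix m n K} (hA : A.rank ≤ 1) : ∃ (u : m → K) (v : n → K), A = vecMulVec u v := by
  classical
  have hA' : Module.finrank K (LinearMap.range A.mulVecLin) ≤ 1 := hA
  obtain ⟨⟨u, _⟩, hu⟩ := finrank_le_one_iff.mp hA'
  have hcol (j : n) : ∃ c : K, c • u = A.col j := by
    obtain ⟨c, hc⟩ := hu ⟨A.mulVecLin (Pi.single j 1), LinearMap.mem_range_self _ _⟩
    exact ⟨c, by simpa using congrArg Subtype.val hc⟩
  choose v hv using hcol
  refine ⟨u, v, Matrix.ext fun i j => ?_⟩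
  simpa [vecMulVec_apply, mul_comm] using (congrFun (hv j) i).symm

theorem exists_eq_prod_of_schmidtRank_le_one {α β : Type*} [Fintype β] {ψ : α × β → ℂ}
    (hψ : schmidtRank ψ ≤ 1) : ∃ (u : α → ℂ) (v : β → ℂ), ∀ a b, ψ (a, b) = u a * v b := by
  obtain ⟨u, v, huv⟩ := Matrix.exists_eq_vecMulVec_of_rank_le_one hψ
  exact ⟨u, v, fun a b => congrFun (congrFun huv a) b⟩

theorem normSq_dotProduct_le {ι : Type*} [Fintype ι] (u v : ι → ℂ) :
    Complex.normSq (u ⬝ᵥ v) ≤ (∑ i, Complex.normSq (u i)) * ∑ i, Complex.normSq (v i) := by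
  have h := norm_inner_le_norm (𝕜 := ℂ) (WithLp.toLp 2 (star u)) (WithLp.toLp 2 v)
  rw [EuclideanSpace.inner_eq_star_dotProduct] at h
  have := pow_le_pow_left₀ (norm_nonneg _) h 2
  rw [mul_pow, EuclideanSpace.norm_sq_eq, EuclideanSpace.norm_sq_eq] at this
  simpa [Complex.sq_norm, dotProduct_comm] using this

theorem IsUnitVec.star_dotProduct_self {γ : Type*} [Fintype γ] {ψ : γ → ℂ}
    (hψ : IsUnitVec ψ) : star ψ ⬝ᵥ ψ = 1 := by
  simp only [dotProduct, Pi.star_apply, Complex.star_def, ← Complex.normSq_eq_conj_mul_self]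
  exact_mod_cast hψ

theorem star_dotProduct_outer_mulVec {γ : Type*} [Fintype γ] (φ ψ : γ → ℂ) :
    star φ ⬝ᵥ outer ψ *ᵥ φ = Complex.normSq (star φ ⬝ᵥ ψ) := by
  rw [show outer ψ = vecMulVec ψ (star ψ) from rfl, vecMulVec_mulVec, star_dotProduct ψ φ]
  simp [mul_comm, Complex.normSq_eq_conj_mul_self]

theorem star_dotProduct_smul_outer_add_smul_one_sub_outer_mulVec {γ : Type*} [Fintype γ]
    [DecidableEq γ] {ψ : γ → ℂ} (hψ : IsUnitVec ψ) (a b : ℂ) :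
    star ψ ⬝ᵥ (a • outer ψ + b • (1 - outer ψ)) *ᵥ ψ = a := by
  simp only [add_mulVec, smul_mulVec, sub_mulVec, one_mulVec, dotProduct_add, dotProduct_smul,
    dotProduct_sub, star_dotProduct_outer_mulVec, hψ.star_dotProduct_self, map_one,
    Complex.ofReal_one, sub_self, smul_eq_mul, mul_one, mul_zero, add_zero]

noncomputable def maxEntangled (α : Type*) [Fintype α] [DecidableEq α] : α × α → ℂ :=
  fun x => if x.1 = x.2 then (Real.sqrt (Fintype.card α) : ℂ)⁻¹ else 0

theorem psiPlus_eq_maxEntangled (N : ℕ) : psiPlus N = maxEntangled (Fin N) := by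
  ext; simp [psiPlus, maxEntangled]

section MaxEntangled

variable {α : Type*} [Fintype α] [DecidableEq α]

theorem isUnitVec_maxEntangled [Nonempty α] : IsUnitVec (maxEntangled α) := by
  simp [IsUnitVec, maxEntangled, Fintype.sum_prod_type, apply_ite]

theorem normSq_star_maxEntangled_dotProduct_le {ψ : α × α → ℂ} (hψ : IsUnitVec ψ)
    (hrank : schmidtRank ψ ≤ 1) :
    Complex.normSq (star (maxEntangled α) ⬝ᵥ ψ) ≤ 1 / Fintype.card α := by
  obtain ⟨u, v, huv⟩ := exists_eq_prod_of_schmidtRank_le_one hrank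
  have hoverlap :
      star (maxEntangled α) ⬝ᵥ ψ = (Real.sqrt (Fintype.card α) : ℂ)⁻¹ * (u ⬝ᵥ v) := by
    simp [dotProduct, maxEntangled, Fintype.sum_prod_type, huv, Finset.mul_sum,
      apply_ite (starRingEnd ℂ), ite_mul]
  have hnorm : (∑ a, Complex.normSq (u a)) * ∑ b, Complex.normSq (v b) = 1 := by
    simpa [IsUnitVec, Fintype.sum_prod_type, huv, Finset.sum_mul_sum] using hψ
  have hcard : Complex.normSq (Real.sqrt (Fintype.card α) : ℂ)⁻¹ = 1 / Fintype.card α := by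
    rw [Complex.normSq_inv, Complex.normSq_ofReal, Real.mul_self_sqrt (Nat.cast_nonneg _),
      one_div]
  rw [hoverlap, Complex.normSq_mul, hcard]
  calc 1 / (Fintype.card α : ℝ) * Complex.normSq (u ⬝ᵥ v)
      ≤ 1 / Fintype.card α * ((∑ a, Complex.normSq (u a)) * ∑ b, Complex.normSq (v b)) := by
        gcongr; exact normSq_dotProduct_le u v
    _ = 1 / Fintype.card α := by rw [hnorm, mul_one]

theorem re_star_maxEntangled_dotProduct_mulVec_le_of_separable
    {ρ : Matrix (α × α) (α × α) ℂ} (hρ : InSchmidtClass 1 ρ) :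
    (star (maxEntangled α) ⬝ᵥ ρ *ᵥ maxEntangled α).re ≤ 1 / Fintype.card α := by
  obtain ⟨m, p, ψ, hp, hsum, hunit, hrank, rfl⟩ := hρ
  simp only [sum_mulVec, smul_mulVec, dotProduct_sum, dotProduct_smul,
    star_dotProduct_outer_mulVec, smul_eq_mul, ← Complex.ofReal_mul, ← Complex.ofReal_sum,
    Complex.ofReal_re]
  calc ∑ i, p i * Complex.normSq (star (maxEntangled α) ⬝ᵥ ψ i)
      ≤ ∑ i, p i * (1 / Fintype.card α) := Finset.sum_le_sum fun i _ =>
        mul_le_mul_of_nonneg_left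
          (normSq_star_maxEntangled_dotProduct_le (hunit i) (hrank i)) (hp i)
    _ = 1 / Fintype.card α := by rw [← Finset.sum_mul, hsum, one_mul]

end MaxEntangled

def reorderedKronVec {α β : Type*} (φ : α × α → ℂ) (χ : β × β → ℂ) :
    (α × β) × (α × β) → ℂ :=
  fun x => φ (x.1.1, x.2.1) * χ (x.1.2, x.2.2)

theorem star_reorderedKronVec {α β : Type*} (φ : α × α → ℂ) (χ : β × β → ℂ) :
    star (reorderedKronVec φ χ) = reorderedKronVec (star φ) (star χ) := by
  ext; simp [reorderedKronVec]

theorem maxEntangled_prod (α β : Type*) [Fintype α] [DecidableEq α] [Fintype β]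
    [DecidableEq β] :
    maxEntangled (α × β) = reorderedKronVec (maxEntangled α) (maxEntangled β) := by
  ext ⟨⟨a, b⟩, ⟨a', b'⟩⟩
  simp only [maxEntangled, reorderedKronVec, Fintype.card_prod, Nat.cast_mul, Prod.mk.injEq]
  rw [Real.sqrt_mul (Nat.cast_nonneg _)]
  split_ifs <;> simp_all [mul_comm]

section ReorderedKron

variable {α β : Type*} [Fintype α] [Fintype β]

theorem reorderedKronVec_dotProduct (φ φ' : α × α → ℂ) (χ χ' : β × β → ℂ) :
    reorderedKronVec φ χ ⬝ᵥ reorderedKronVec φ' χ' = (φ ⬝ᵥ φ') * (χ ⬝ᵥ χ') := by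
  simp only [dotProduct, Finset.sum_mul_sum, ← Finset.sum_product']
  exact Fintype.sum_equiv (Equiv.prodProdProdComm α β α β) _ _ fun _ => by
    simp only [reorderedKronVec, Equiv.prodProdProdComm_apply]; ring

theorem reorderedKron_mulVec_reorderedKronVec (ρ : Matrix (α × α) (α × α) ℂ)
    (σ : Matrix (β × β) (β × β) ℂ) (φ : α × α → ℂ) (χ : β × β → ℂ) :
    reorderedKron ρ σ *ᵥ reorderedKronVec φ χ = reorderedKronVec (ρ *ᵥ φ) (σ *ᵥ χ) := by
  ext x
  simp only [mulVec, dotProduct, reorderedKron, reorderedKronVec, of_apply,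
    Finset.sum_mul_sum, ← Finset.sum_product']
  exact Fintype.sum_equiv (Equiv.prodProdProdComm α β α β) _ _ fun _ => by
    simp only [Equiv.prodProdProdComm_apply]; ring

theorem star_dotProduct_reorderedKron_mulVec (ρ : Matrix (α × α) (α × α) ℂ)
    (σ : Matrix (β × β) (β × β) ℂ) (φ : α × α → ℂ) (χ : β × β → ℂ) :
    star (reorderedKronVec φ χ) ⬝ᵥ reorderedKron ρ σ *ᵥ reorderedKronVec φ χ =
      (star φ ⬝ᵥ ρ *ᵥ φ) * (star χ ⬝ᵥ σ *ᵥ χ) := by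
  rw [star_reorderedKronVec, reorderedKron_mulVec_reorderedKronVec, reorderedKronVec_dotProduct]

end ReorderedKron

theorem star_psiPlus_dotProduct_rhoF_mulVec (N : ℕ) [NeZero N] (F : ℝ) :
    star (psiPlus N) ⬝ᵥ rhoF N F *ᵥ psiPlus N = F := by
  rw [rhoF, psiPlus_eq_maxEntangled]
  exact star_dotProduct_smul_outer_add_smul_one_sub_outer_mulVec isUnitVec_maxEntangled _ _

/-- For `N = 2` and `F = 1/√2`, the two-copy state `ρ_F ⊗ ρ_F`, regrouped
across the `(A₁A₂):(B₁B₂)` cut, is not separable: it does not belong to `S_1`. -/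
theorem rhoF_two_copies_not_separable :
    ¬ InSchmidtClass 1
      (reorderedKron (rhoF 2 ((Real.sqrt 2))⁻¹) (rhoF 2 ((Real.sqrt 2))⁻¹)) := by
  intro hsep
  have hfidelity := re_star_maxEntangled_dotProduct_mulVec_le_of_separable hsep
  rw [maxEntangled_prod, star_dotProduct_reorderedKron_mulVec, ← psiPlus_eq_maxEntangled,
    star_psiPlus_dotProduct_rhoF_mulVec, ← Complex.ofReal_mul, Complex.ofReal_re, ← mul_inv,
    Real.mul_self_sqrt zero_le_two] at hfidelity
  norm_num at hfidelity
end

section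
/- Let Λ : M_n(ℂ) → M_m(ℂ) be a linear Hermiticity-preserving map that is n-positive, i.e. (1_k ⊗ Λ) maps positive semidefinite matrices to positive semidefinite matrices for k = n. Then Λ is completely positive: for every k ≥ 1, the map 1_k ⊗ Λ, acting on matrices indexed by Fin k × Fin n by applying Λ to each n×n block, maps positive semidefinite matrices to positive semidefinite matrices. -/
open Matrix BigOperators
open scoped ComplexOrder

/-!
Choi's argument. A positive semidefinite `X` is a sum of rank-one matrices `|v⟩⟨v|`, and
every `v ∈ ℂ^k ⊗ ℂ^n` is `(M_v ⊗ 1) φ` for the unnormalised maximally entangled vector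
`φ = ∑ e_a ⊗ e_a ∈ ℂ^n ⊗ ℂ^n`. Since `1 ⊗ Λ` commutes with conjugation by `M_v ⊗ 1`,
`(1 ⊗ Λ)|v⟩⟨v| = (M_v ⊗ 1) C_Λ (M_v ⊗ 1)†`, where the Choi matrix `C_Λ = (1_n ⊗ Λ)|φ⟩⟨φ|`
is positive semidefinite by `n`-positivity.
-/

open scoped Kronecker

section BlockMap

variable {n m : ℕ} (Λ : Matrix (Fin n) (Fin n) ℂ →ₗ[ℂ] Matrix (Fin m) (Fin m) ℂ)

lemma blockMap_sum {γ ι : Type*} (s : Finset ι) (f : ι → Matrix (γ × Fin n) (γ × Fin n) ℂ) :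
    blockMap Λ (∑ i ∈ s, f i) = ∑ i ∈ s, blockMap Λ (f i) := by
  ext a b
  have hblock : (of fun u t => (∑ i ∈ s, f i) (a.1, u) (b.1, t))
      = ∑ i ∈ s, of fun u t => f i (a.1, u) (b.1, t) := by
    ext u t
    simp [Matrix.sum_apply]
  simp only [blockMap, of_apply]
  rw [hblock]
  simp only [map_sum, Matrix.sum_apply, of_apply]

lemma kronecker_one_mul_mul_conjTranspose_apply {γ δ p : Type*} [Fintype δ] [Fintype p]
    [DecidableEq p] (A : Matrix γ δ ℂ) (Z : Matrix (δ × p) (δ × p) ℂ) (i j : γ) (u w : p) :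
    ((A ⊗ₖ (1 : Matrix p p ℂ)) * Z * (A ⊗ₖ (1 : Matrix p p ℂ))ᴴ) (i, u) (j, w)
      = ∑ a, ∑ b, A i a * star (A j b) * Z (a, u) (b, w) := by
  simp only [mul_apply, kroneckerMap_apply, one_apply, mul_ite, mul_one, mul_zero, ite_mul,
    zero_mul, Fintype.sum_prod_type, Finset.sum_ite_eq, Finset.mem_univ, ↓reduceIte,
    conjTranspose_apply, RCLike.star_def, apply_ite (starRingEnd ℂ), map_zero, Finset.sum_mul]
  rw [Finset.sum_comm]
  refine Finset.sum_congr rfl fun a _ => Finset.sum_congr rfl fun b _ => ?_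
  ring

lemma blockMap_kronecker_one_conj {γ δ : Type*} [Fintype δ] (A : Matrix γ δ ℂ)
    (Y : Matrix (δ × Fin n) (δ × Fin n) ℂ) :
    blockMap Λ
        ((A ⊗ₖ (1 : Matrix (Fin n) (Fin n) ℂ)) * Y * (A ⊗ₖ (1 : Matrix (Fin n) (Fin n) ℂ))ᴴ)
      = (A ⊗ₖ (1 : Matrix (Fin m) (Fin m) ℂ)) * blockMap Λ Y
        * (A ⊗ₖ (1 : Matrix (Fin m) (Fin m) ℂ))ᴴ := by
  ext ⟨i, s⟩ ⟨j, t⟩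
  have hblock : (of fun u w =>
      ((A ⊗ₖ (1 : Matrix (Fin n) (Fin n) ℂ)) * Y * (A ⊗ₖ (1 : Matrix (Fin n) (Fin n) ℂ))ᴴ)
        (i, u) (j, w))
      = ∑ a, ∑ b, (A i a * star (A j b)) • of fun u w => Y (a, u) (b, w) := by
    ext u w
    simp [kronecker_one_mul_mul_conjTranspose_apply, Matrix.sum_apply]
  rw [kronecker_one_mul_mul_conjTranspose_apply]
  simp only [blockMap, of_apply, hblock, map_sum, map_smul, Matrix.sum_apply, Matrix.smul_apply,
    smul_eq_mul]

end BlockMap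

lemma vecMulVec_mulVec_star {R α β : Type*} [NonUnitalSemiring R] [StarRing R] [Fintype β]
    (M : Matrix α β R) (x : β → R) :
    vecMulVec (M *ᵥ x) (star (M *ᵥ x)) = M * vecMulVec x (star x) * Mᴴ := by
  rw [mul_vecMulVec, vecMulVec_mul, star_mulVec]

def maxEntangledVec (n : ℕ) : Fin n × Fin n → ℂ :=
  fun p => (1 : Matrix (Fin n) (Fin n) ℂ) p.1 p.2

def choiMatrix {n m : ℕ} (Λ : Matrix (Fin n) (Fin n) ℂ → Matrix (Fin m) (Fin m) ℂ) :
    Matrix (Fin n × Fin m) (Fin n × Fin m) ℂ :=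
  blockMap Λ (vecMulVec (maxEntangledVec n) (star (maxEntangledVec n)))

lemma matOfVec_kronecker_one_mulVec_maxEntangledVec {γ : Type*} {n : ℕ} (v : γ × Fin n → ℂ) :
    (matOfVec v ⊗ₖ (1 : Matrix (Fin n) (Fin n) ℂ)) *ᵥ maxEntangledVec n = v := by
  ext ⟨i, s⟩
  simp [mulVec, dotProduct, Fintype.sum_prod_type, one_apply, matOfVec, maxEntangledVec]

lemma blockMap_vecMulVec_eq_conj_choiMatrix {γ : Type*} {n m : ℕ}
    (Λ : Matrix (Fin n) (Fin n) ℂ →ₗ[ℂ] Matrix (Fin m) (Fin m) ℂ) (v : γ × Fin n → ℂ) :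
    blockMap Λ (vecMulVec v (star v))
      = (matOfVec v ⊗ₖ (1 : Matrix (Fin m) (Fin m) ℂ)) * choiMatrix Λ
        * (matOfVec v ⊗ₖ (1 : Matrix (Fin m) (Fin m) ℂ))ᴴ := by
  conv_lhs => rw [← matOfVec_kronecker_one_mulVec_maxEntangledVec v]
  rw [vecMulVec_mulVec_star, blockMap_kronecker_one_conj, choiMatrix]

theorem completelyPositive_of_n_positive_general {n m : ℕ}
    (Λ : Matrix (Fin n) (Fin n) ℂ →ₗ[ℂ] Matrix (Fin m) (Fin m) ℂ)
    (hnpos : ∀ X : Matrix (Fin n × Fin n) (Fin n × Fin n) ℂ, X.PosSemidef →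
      (blockMap (γ := Fin n) (⇑Λ) X).PosSemidef) :
    ∀ k : ℕ, 1 ≤ k → ∀ X : Matrix (Fin k × Fin n) (Fin k × Fin n) ℂ, X.PosSemidef →
      (blockMap (γ := Fin k) (⇑Λ) X).PosSemidef := by
  intro k _ X hX
  obtain ⟨r, v, rfl⟩ := posSemidef_iff_eq_sum_vecMulVec.mp hX
  have hchoi : (choiMatrix Λ).PosSemidef := hnpos _ (posSemidef_vecMulVec_self_star _)
  rw [blockMap_sum]
  refine posSemidef_sum _ fun i _ => ?_
  rw [blockMap_vecMulVec_eq_conj_choiMatrix]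
  exact hchoi.mul_mul_conjTranspose_same _

/-- If a Hermiticity-preserving linear map `Λ : M_n(ℂ) → M_m(ℂ)` is
`n`-positive, then it is completely positive: for every `k ≥ 1`, the map `1_k ⊗ Λ` maps
positive semidefinite matrices to positive semidefinite matrices. -/
theorem completelyPositive_of_n_positive {n m : ℕ}
    (Λ : Matrix (Fin n) (Fin n) ℂ →ₗ[ℂ] Matrix (Fin m) (Fin m) ℂ)
    (hherm : ∀ X, Λ Xᴴ = (Λ X)ᴴ)
    (hnpos : ∀ X : Matrix (Fin n × Fin n) (Fin n × Fin n) ℂ, X.PosSemidef →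
      (blockMap (γ := Fin n) (⇑Λ) X).PosSemidef) :
    ∀ k : ℕ, 1 ≤ k → ∀ X : Matrix (Fin k × Fin n) (Fin k × Fin n) ℂ, X.PosSemidef →
      (blockMap (γ := Fin k) (⇑Λ) X).PosSemidef :=
  completelyPositive_of_n_positive_general Λ hnpos
end
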